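/- Let TL, TR, BL, BR be rotations by π in SO(3) (order-2 elements, identified with their axes, which are lines in R^3). Suppose: (i) TL ⊥ BL and TR ⊥ BR; (ii) the unique axis perpendicular to both TR and BR lies in the plane spanned by TL and BL and makes an angle of π/4 with each of them; (iii) symmetrically, the axis perpendicular to both TL and BL lies in the plane spanned by TR and BR at angle π/4 to each. Then any two quadruples (TL, TR, BL, BR) and (TL', TR', BL', BR') satisfying these conditions are conjugate by a single element of SO(3), i.e., the configuration is unique up to the simultaneous SO(3) action. -/

import Mathlib

open Matrix

/-- A configuration of four `π`-rotations `TL, TR, BL, BR` in `SO(3)` together with unit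
vectors spanning their axes, satisfying the conditions of the paper's partial example:
`TL ⊥ BL`, `TR ⊥ BR`; every unit vector orthogonal to the axes of `TR` and `BR` lies in the
plane spanned by the axes of `TL` and `BL`, at angle `π/4` to each of them; and
symmetrically. -/
structure PiRotationConfig (TL TR BL BR : Matrix (Fin 3) (Fin 3) ℝ)
    (tl tr bl br : Fin 3 → ℝ) : Prop where
  oTL : TL ∈ Matrix.orthogonalGroup (Fin 3) ℝ
  dTL : TL.det = 1
  rTL : TL * TL = 1 ∧ TL ≠ 1
  axTL : TL.mulVec tl = tl ∧ tl ⬝ᵥ tl = 1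
  oTR : TR ∈ Matrix.orthogonalGroup (Fin 3) ℝ
  dTR : TR.det = 1
  rTR : TR * TR = 1 ∧ TR ≠ 1
  axTR : TR.mulVec tr = tr ∧ tr ⬝ᵥ tr = 1
  oBL : BL ∈ Matrix.orthogonalGroup (Fin 3) ℝ
  dBL : BL.det = 1
  rBL : BL * BL = 1 ∧ BL ≠ 1
  axBL : BL.mulVec bl = bl ∧ bl ⬝ᵥ bl = 1
  oBR : BR ∈ Matrix.orthogonalGroup (Fin 3) ℝ
  dBR : BR.det = 1
  rBR : BR * BR = 1 ∧ BR ≠ 1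
  axBR : BR.mulVec br = br ∧ br ⬝ᵥ br = 1
  perpL : tl ⬝ᵥ bl = 0
  perpR : tr ⬝ᵥ br = 0
  condR : ∀ u : Fin 3 → ℝ, u ⬝ᵥ u = 1 → u ⬝ᵥ tr = 0 → u ⬝ᵥ br = 0 →
    u ∈ Submodule.span ℝ ({tl, bl} : Set (Fin 3 → ℝ)) ∧
      |u ⬝ᵥ tl| = Real.sqrt 2 / 2 ∧ |u ⬝ᵥ bl| = Real.sqrt 2 / 2
  condL : ∀ u : Fin 3 → ℝ, u ⬝ᵥ u = 1 → u ⬝ᵥ tl = 0 → u ⬝ᵥ bl = 0 →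
    u ∈ Submodule.span ℝ ({tr, br} : Set (Fin 3 → ℝ)) ∧
      |u ⬝ᵥ tr| = Real.sqrt 2 / 2 ∧ |u ⬝ᵥ br| = Real.sqrt 2 / 2

/-!
A `π`-rotation `R ∈ SO(3)` with unit axis `v` equals `2 v vᵀ - 1`. Indeed `R` preserves the triple
product, so if it fixes two independent vectors it also fixes their cross product and is the
identity; hence for `R ≠ 1` the fixed vectors are the multiples of `v`, and `R x + x` is one of
them for every `x`. A configuration is therefore determined by its four axes, each up to sign.

Expand `tr` and `br` in the orthonormal frame `tl, bl, tl ⨯₃ bl`. The `π/4` condition on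
`tl ⨯₃ bl` fixes the third coordinates up to sign. Since `tr` is orthogonal to `tr ⨯₃ br`, which
lies in the plane of `tl, bl` at angle `π/4` to both, the first two coordinates of `tr` agree in
absolute value, so `tr` has coordinates `(±1/2, ±1/2, ±√2/2)`; writing `tl ⨯₃ bl` in the frame
`tr, br` ties the signs of the coordinates of `br` to those of `tr`. Flipping the four axes
suitably brings every configuration to one normal form, and the rotation carrying one frame
`tl, bl, tl ⨯₃ bl` to another conjugates the corresponding configurations.
-/

lemma dotProduct_mulVec_mulVec_of_mem_orthogonalGroup {n 𝕜 : Type*} [Fintype n] [DecidableEq n]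
    [CommRing 𝕜] {R : Matrix n n 𝕜} (hR : R ∈ orthogonalGroup n 𝕜) (x y : n → 𝕜) :
    R *ᵥ x ⬝ᵥ R *ᵥ y = x ⬝ᵥ y := by
  rw [dotProduct_mulVec, ← mulVec_transpose, mulVec_mulVec, (mem_orthogonalGroup_iff' _ _).mp hR,
    one_mulVec]

lemma triple_product_mulVec {𝕜 : Type*} [CommRing 𝕜] (R : Matrix (Fin 3) (Fin 3) 𝕜)
    (u v w : Fin 3 → 𝕜) : R *ᵥ u ⬝ᵥ (R *ᵥ v) ⨯₃ (R *ᵥ w) = R.det * (u ⬝ᵥ v ⨯₃ w) := by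
  have h : (![R *ᵥ u, R *ᵥ v, R *ᵥ w] : Matrix (Fin 3) (Fin 3) 𝕜) = of ![u, v, w] * Rᵀ := by
    ext i j
    fin_cases i <;> simp [mul_apply, mulVec, dotProduct, mul_comm]
  rw [triple_product_eq_det, triple_product_eq_det, h, det_mul, det_transpose, mul_comm]
  rfl

lemma smul_cross_smul {𝕜 : Type*} [CommRing 𝕜] (a b : 𝕜) (u v : Fin 3 → 𝕜) :
    (a • u) ⨯₃ (b • v) = (a * b) • u ⨯₃ v := by
  rw [map_smul, map_smul, LinearMap.smul_apply, smul_smul, mul_comm]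

section Frame

def frameMatrix (u v : Fin 3 → ℝ) : Matrix (Fin 3) (Fin 3) ℝ := of ![u, v, u ⨯₃ v]

variable {u v : Fin 3 → ℝ}

lemma frameMatrix_apply (u v : Fin 3 → ℝ) (i : Fin 3) :
    frameMatrix u v i = ![u, v, u ⨯₃ v] i := rfl

lemma det_frameMatrix (u v : Fin 3 → ℝ) : (frameMatrix u v).det = u ⨯₃ v ⬝ᵥ u ⨯₃ v := by
  have h := triple_product_eq_det u v (u ⨯₃ v)
  rw [triple_product_permutation, triple_product_permutation] at h
  exact h.symm

lemma transpose_frameMatrix_mul_frameMatrix_mulVec (u v u' v' x : Fin 3 → ℝ) :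
    ((frameMatrix u' v')ᵀ * frameMatrix u v) *ᵥ x =
      (u ⬝ᵥ x) • u' + (v ⬝ᵥ x) • v' + (u ⨯₃ v ⬝ᵥ x) • u' ⨯₃ v' := by
  rw [← mulVec_mulVec]
  ext i
  simp [frameMatrix, mulVec, dotProduct, Fin.sum_univ_three, mul_comm]

lemma cross_dotProduct_cross_self (hu : u ⬝ᵥ u = 1) (hv : v ⬝ᵥ v = 1) (huv : u ⬝ᵥ v = 0) :
    u ⨯₃ v ⬝ᵥ u ⨯₃ v = 1 := by
  rw [cross_dot_cross, hu, hv, huv, zero_mul, sub_zero, one_mul]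

lemma frameMatrix_mul_transpose (hu : u ⬝ᵥ u = 1) (hv : v ⬝ᵥ v = 1) (huv : u ⬝ᵥ v = 0) :
    frameMatrix u v * (frameMatrix u v)ᵀ = 1 := by
  have hvu : v ⬝ᵥ u = 0 := by rw [dotProduct_comm, huv]
  have hw := cross_dotProduct_cross_self hu hv huv
  ext i j
  rw [mul_apply']
  fin_cases i <;> fin_cases j <;>
    simp [frameMatrix_apply, hu, hv, huv, hvu, hw, dot_self_cross, dot_cross_self,
      dotProduct_comm (u ⨯₃ v)]

lemma eq_sum_smul_frame (hu : u ⬝ᵥ u = 1) (hv : v ⬝ᵥ v = 1) (huv : u ⬝ᵥ v = 0)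
    (x : Fin 3 → ℝ) : x = (u ⬝ᵥ x) • u + (v ⬝ᵥ x) • v + (u ⨯₃ v ⬝ᵥ x) • u ⨯₃ v := by
  rw [← transpose_frameMatrix_mul_frameMatrix_mulVec,
    mul_eq_one_comm.mp (frameMatrix_mul_transpose hu hv huv), one_mulVec]

lemma sum_sq_dotProduct_frame (hu : u ⬝ᵥ u = 1) (hv : v ⬝ᵥ v = 1) (huv : u ⬝ᵥ v = 0)
    (x : Fin 3 → ℝ) : (u ⬝ᵥ x) ^ 2 + (v ⬝ᵥ x) ^ 2 + (u ⨯₃ v ⬝ᵥ x) ^ 2 = x ⬝ᵥ x := by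
  have h := congrArg (· ⬝ᵥ x) (eq_sum_smul_frame hu hv huv x)
  simp only [add_dotProduct, smul_dotProduct, smul_eq_mul] at h
  rw [h]
  ring

lemma eq_add_of_mem_span_pair (hu : u ⬝ᵥ u = 1) (hv : v ⬝ᵥ v = 1) (huv : u ⬝ᵥ v = 0)
    {x : Fin 3 → ℝ} (hx : x ∈ Submodule.span ℝ {u, v}) : x = (u ⬝ᵥ x) • u + (v ⬝ᵥ x) • v := by
  obtain ⟨α, β, rfl⟩ := Submodule.mem_span_pair.mp hx
  simp [dotProduct_add, hu, hv, huv, dotProduct_comm v u]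

theorem exists_mem_orthogonalGroup_mulVec_eq {u' v' : Fin 3 → ℝ} (hu : u ⬝ᵥ u = 1)
    (hv : v ⬝ᵥ v = 1) (huv : u ⬝ᵥ v = 0) (hu' : u' ⬝ᵥ u' = 1) (hv' : v' ⬝ᵥ v' = 1)
    (huv' : u' ⬝ᵥ v' = 0) :
    ∃ P ∈ orthogonalGroup (Fin 3) ℝ, P.det = 1 ∧
      P *ᵥ u = u' ∧ P *ᵥ v = v' ∧ P *ᵥ u ⨯₃ v = u' ⨯₃ v' := by
  have hF := frameMatrix_mul_transpose hu hv huv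
  have hF' := mul_eq_one_comm.mp (frameMatrix_mul_transpose hu' hv' huv')
  refine ⟨(frameMatrix u' v')ᵀ * frameMatrix u v, ?_, ?_, ?_, ?_, ?_⟩
  · rw [mem_orthogonalGroup_iff, transpose_mul, transpose_transpose, mul_assoc,
      ← mul_assoc (frameMatrix u v), hF, one_mul, hF']
  · rw [det_mul, det_transpose, det_frameMatrix, det_frameMatrix,
      cross_dotProduct_cross_self hu hv huv, cross_dotProduct_cross_self hu' hv' huv', one_mul]
  all_goals
    simp [transpose_frameMatrix_mul_frameMatrix_mulVec, hu, hv, huv, dotProduct_comm v u,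
      dot_self_cross, dot_cross_self, dotProduct_comm (u ⨯₃ v), cross_dotProduct_cross_self hu hv huv]

end Frame

section Rotation

variable {R : Matrix (Fin 3) (Fin 3) ℝ}

lemma eq_one_of_mulVec_eq_self_of_cross_ne_zero (hR : R ∈ orthogonalGroup (Fin 3) ℝ)
    (hdet : R.det = 1) {v w : Fin 3 → ℝ} (hv : R *ᵥ v = v) (hw : R *ᵥ w = w)
    (hvw : v ⨯₃ w ≠ 0) : R = 1 := by
  set u := v ⨯₃ w
  have hRu : R *ᵥ u = u := by
    have hdot : R *ᵥ u ⬝ᵥ u = u ⬝ᵥ u := by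
      simpa [hv, hw, hdet] using triple_product_mulVec R u v w
    have hnorm := dotProduct_mulVec_mulVec_of_mem_orthogonalGroup hR u u
    have h0 : (R *ᵥ u - u) ⬝ᵥ (R *ᵥ u - u) = 0 := by
      simp only [sub_dotProduct, dotProduct_sub, dotProduct_comm u, hdot, hnorm]
      ring
    exact sub_eq_zero.mp (dotProduct_self_eq_zero.mp h0)
  have hF : IsUnit (frameMatrix v w)ᵀ := by
    rw [isUnit_iff_isUnit_det, det_transpose, det_frameMatrix, isUnit_iff_ne_zero]
    exact fun h => hvw (dotProduct_self_eq_zero.mp h)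
  refine hF.mul_left_injective (?_ : R * _ = 1 * _)
  rw [one_mul]
  ext i j
  fin_cases j
  · simpa [mul_apply, mulVec, dotProduct, frameMatrix] using congrFun hv i
  · simpa [mul_apply, mulVec, dotProduct, frameMatrix] using congrFun hw i
  · simpa [mul_apply, mulVec, dotProduct, frameMatrix] using congrFun hRu i

lemma eq_smul_of_mulVec_eq_self (hR : R ∈ orthogonalGroup (Fin 3) ℝ) (hdet : R.det = 1)
    (hne : R ≠ 1) {v x : Fin 3 → ℝ} (hv : R *ᵥ v = v) (hv1 : v ⬝ᵥ v = 1) (hx : R *ᵥ x = x) :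
    x = (v ⬝ᵥ x) • v := by
  set y := x - (v ⬝ᵥ x) • v
  have hRy : R *ᵥ y = y := by rw [mulVec_sub, mulVec_smul, hx, hv]
  have hvy : v ⬝ᵥ y = 0 := by simp [y, dotProduct_sub, hv1]
  by_contra hxv
  have hy : y ≠ 0 := sub_ne_zero.mpr hxv
  refine hne (eq_one_of_mulVec_eq_self_of_cross_ne_zero hR hdet hv hRy fun h0 => hy ?_)
  have h := congrArg (fun z => z ⬝ᵥ z) h0
  simp only [cross_dot_cross, hv1, hvy, dotProduct_comm y v, dotProduct_zero] at h
  exact dotProduct_self_eq_zero.mp (by linarith)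

noncomputable def piRotation (v : Fin 3 → ℝ) : Matrix (Fin 3) (Fin 3) ℝ :=
  (2 : ℝ) • vecMulVec v v - 1

lemma piRotation_mulVec (v x : Fin 3 → ℝ) : piRotation v *ᵥ x = (2 * (v ⬝ᵥ x)) • v - x := by
  rw [piRotation, sub_mulVec, smul_mulVec, vecMulVec_mulVec, op_smul_eq_smul, one_mulVec,
    smul_smul]

lemma piRotation_smul {c : ℝ} (hc : c * c = 1) (v : Fin 3 → ℝ) :
    piRotation (c • v) = piRotation v := by
  rw [piRotation, piRotation, smul_vecMulVec, vecMulVec_smul, smul_smul c c, hc, one_smul]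

lemma piRotation_mulVec_eq_conj {P : Matrix (Fin 3) (Fin 3) ℝ} (hP : P * Pᵀ = 1)
    (v : Fin 3 → ℝ) : piRotation (P *ᵥ v) = P * piRotation v * Pᵀ := by
  rw [piRotation, piRotation, mul_sub, sub_mul, mul_one, hP, Matrix.mul_smul, Matrix.smul_mul,
    mul_vecMulVec, vecMulVec_mul, vecMul_transpose]

lemma eq_piRotation_of_mul_self_eq_one (hR : R ∈ orthogonalGroup (Fin 3) ℝ) (hdet : R.det = 1)
    (hR2 : R * R = 1) (hne : R ≠ 1) {v : Fin 3 → ℝ} (hv : R *ᵥ v = v) (hv1 : v ⬝ᵥ v = 1) :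
    R = piRotation v := by
  have hsymm : Rᵀ = R := by
    calc Rᵀ = Rᵀ * (R * R) := by rw [hR2, mul_one]
      _ = R := by rw [← mul_assoc, (mem_orthogonalGroup_iff' _ _).mp hR, one_mul]
  refine ext_iff_mulVec.mpr fun x => ?_
  have hfix : R *ᵥ (R *ᵥ x + x) = R *ᵥ x + x := by
    rw [mulVec_add, mulVec_mulVec, hR2, one_mulVec, add_comm]
  have hdot : v ⬝ᵥ R *ᵥ x = v ⬝ᵥ x := by
    rw [dotProduct_mulVec, ← mulVec_transpose, hsymm, hv]
  have h := eq_smul_of_mulVec_eq_self hR hdet hne hv hv1 hfix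
  rw [dotProduct_add, hdot, ← two_mul] at h
  rw [piRotation_mulVec, ← h, add_sub_cancel_right]

end Rotation

lemma sq_dotProduct_eq_quarter_of_orthogonal {u v n x : Fin 3 → ℝ} (hu : u ⬝ᵥ u = 1)
    (hv : v ⬝ᵥ v = 1) (huv : u ⬝ᵥ v = 0) (hn : n ∈ Submodule.span ℝ {u, v})
    (hnu : (u ⬝ᵥ n) ^ 2 = 1 / 2) (hnv : (v ⬝ᵥ n) ^ 2 = 1 / 2) (hx : x ⬝ᵥ x = 1)
    (hxn : n ⬝ᵥ x = 0) (hxw : (u ⨯₃ v ⬝ᵥ x) ^ 2 = 1 / 2) :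
    (u ⬝ᵥ x) ^ 2 = 1 / 4 ∧ (v ⬝ᵥ x) ^ 2 = 1 / 4 := by
  have hlin : (u ⬝ᵥ n) * (u ⬝ᵥ x) + (v ⬝ᵥ n) * (v ⬝ᵥ x) = 0 := by
    rw [eq_add_of_mem_span_pair hu hv huv hn] at hxn
    simpa only [add_dotProduct, smul_dotProduct, smul_eq_mul] using hxn
  have hsq : (u ⬝ᵥ x) ^ 2 = (v ⬝ᵥ x) ^ 2 := by
    linear_combination 2 * ((u ⬝ᵥ n) * (u ⬝ᵥ x) - (v ⬝ᵥ n) * (v ⬝ᵥ x)) * hlin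
      - 2 * (u ⬝ᵥ x) ^ 2 * hnu + 2 * (v ⬝ᵥ x) ^ 2 * hnv
  have hsum := sum_sq_dotProduct_frame hu hv huv x
  constructor <;> linarith

structure IsStandardAxes (tl tr bl br : Fin 3 → ℝ) : Prop where
  tl_dotProduct_tl : tl ⬝ᵥ tl = 1
  bl_dotProduct_bl : bl ⬝ᵥ bl = 1
  tl_dotProduct_bl : tl ⬝ᵥ bl = 0
  tr_eq : tr = (1 / 2 : ℝ) • tl + (1 / 2 : ℝ) • bl + (√2 / 2) • tl ⨯₃ bl
  br_eq : br = (-1 / 2 : ℝ) • tl + (-1 / 2 : ℝ) • bl + (√2 / 2) • tl ⨯₃ bl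

lemma exists_isStandardAxes_smul {u v x y : Fin 3 → ℝ} {a b p a' b' p' : ℝ}
    (hu : u ⬝ᵥ u = 1) (hv : v ⬝ᵥ v = 1) (huv : u ⬝ᵥ v = 0)
    (hx : x = a • u + b • v + p • u ⨯₃ v) (hy : y = a' • u + b' • v + p' • u ⨯₃ v)
    (ha : a ^ 2 = 1 / 4) (hb : b ^ 2 = 1 / 4) (hp : p ^ 2 = 1 / 2) (hp' : p' ^ 2 = 1 / 2)
    (hpa : p * a + p' * a' = 0) (hpb : p * b + p' * b' = 0) :
    ∃ ε₁ ε₂ ε₃ ε₄ : ℝ, ε₁ * ε₁ = 1 ∧ ε₂ * ε₂ = 1 ∧ ε₃ * ε₃ = 1 ∧ ε₄ * ε₄ = 1 ∧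
      IsStandardAxes (ε₁ • u) (ε₃ • x) (ε₂ • v) (ε₄ • y) := by
  have h2 : √2 ^ 2 = 2 := Real.sq_sqrt zero_le_two
  -- `2√2 p b = sign p * sign b`, and similarly for the other three scalars.
  set ε₁ := 2 * √2 * p * b
  set ε₂ := 2 * √2 * p * a
  have hε₁ : ε₁ * ε₁ = 1 := by
    linear_combination 4 * p ^ 2 * b ^ 2 * h2 + 8 * p ^ 2 * hb + 2 * hp
  have hε₂ : ε₂ * ε₂ = 1 := by
    linear_combination 4 * p ^ 2 * a ^ 2 * h2 + 8 * p ^ 2 * ha + 2 * hp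
  refine ⟨ε₁, ε₂, 4 * √2 * p * a * b, 4 * √2 * p' * a * b, hε₁, hε₂, ?_, ?_,
    ⟨?_, ?_, ?_, ?_, ?_⟩⟩
  · linear_combination 16 * p ^ 2 * a ^ 2 * b ^ 2 * h2 + 32 * a ^ 2 * b ^ 2 * hp
      + 16 * a ^ 2 * hb + 4 * ha
  · linear_combination 16 * p' ^ 2 * a ^ 2 * b ^ 2 * h2 + 32 * a ^ 2 * b ^ 2 * hp'
      + 16 * a ^ 2 * hb + 4 * ha
  · rw [smul_dotProduct, dotProduct_smul, hu, smul_eq_mul, smul_eq_mul, mul_one, hε₁]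
  · rw [smul_dotProduct, dotProduct_smul, hv, smul_eq_mul, smul_eq_mul, mul_one, hε₂]
  · rw [smul_dotProduct, dotProduct_smul, huv, smul_zero, smul_zero]
  · rw [smul_cross_smul, hx]
    match_scalars
    · linear_combination 4 * √2 * p * b * ha
    · linear_combination 4 * √2 * p * a * hb
    · linear_combination -2 * √2 * p ^ 2 * a * b * h2
  · rw [smul_cross_smul, hy]
    match_scalars
    · linear_combination 4 * √2 * a * b * hpa - 4 * √2 * p * b * ha
    · linear_combination 4 * √2 * a * b * hpb - 4 * √2 * p * a * hb
    · linear_combination 4 * √2 * a * b * hp' - 2 * √2 * p ^ 2 * a * b * h2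
        - 4 * √2 * a * b * hp

theorem IsStandardAxes.exists_mulVec_eq {tl tr bl br tl' tr' bl' br' : Fin 3 → ℝ}
    (h : IsStandardAxes tl tr bl br) (h' : IsStandardAxes tl' tr' bl' br') :
    ∃ P ∈ orthogonalGroup (Fin 3) ℝ, P.det = 1 ∧
      P *ᵥ tl = tl' ∧ P *ᵥ tr = tr' ∧ P *ᵥ bl = bl' ∧ P *ᵥ br = br' := by
  obtain ⟨P, hP, hdet, htl, hbl, hcross⟩ :=
    exists_mem_orthogonalGroup_mulVec_eq h.tl_dotProduct_tl h.bl_dotProduct_bl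
      h.tl_dotProduct_bl h'.tl_dotProduct_tl h'.bl_dotProduct_bl h'.tl_dotProduct_bl
  refine ⟨P, hP, hdet, htl, ?_, hbl, ?_⟩
  · rw [h.tr_eq, h'.tr_eq, mulVec_add, mulVec_add, mulVec_smul, mulVec_smul, mulVec_smul, htl,
      hbl, hcross]
  · rw [h.br_eq, h'.br_eq, mulVec_add, mulVec_add, mulVec_smul, mulVec_smul, mulVec_smul, htl,
      hbl, hcross]

lemma sq_eq_half_of_abs_eq {x : ℝ} (h : |x| = √2 / 2) : x ^ 2 = 1 / 2 := by
  rw [← sq_abs, h, div_pow, Real.sq_sqrt zero_le_two]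
  norm_num

namespace PiRotationConfig

variable {TL TR BL BR : Matrix (Fin 3) (Fin 3) ℝ} {tl tr bl br : Fin 3 → ℝ}

lemma condL_cross (hc : PiRotationConfig TL TR BL BR tl tr bl br) :
    tl ⨯₃ bl ∈ Submodule.span ℝ {tr, br} ∧
      |tl ⨯₃ bl ⬝ᵥ tr| = √2 / 2 ∧ |tl ⨯₃ bl ⬝ᵥ br| = √2 / 2 :=
  hc.condL _ (cross_dotProduct_cross_self hc.axTL.2 hc.axBL.2 hc.perpL)
    (by rw [dotProduct_comm, dot_self_cross]) (by rw [dotProduct_comm, dot_cross_self])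

lemma condR_cross (hc : PiRotationConfig TL TR BL BR tl tr bl br) :
    tr ⨯₃ br ∈ Submodule.span ℝ {tl, bl} ∧
      |tr ⨯₃ br ⬝ᵥ tl| = √2 / 2 ∧ |tr ⨯₃ br ⬝ᵥ bl| = √2 / 2 :=
  hc.condR _ (cross_dotProduct_cross_self hc.axTR.2 hc.axBR.2 hc.perpR)
    (by rw [dotProduct_comm, dot_self_cross]) (by rw [dotProduct_comm, dot_cross_self])

lemma eq_piRotation (hc : PiRotationConfig TL TR BL BR tl tr bl br) :
    TL = piRotation tl ∧ TR = piRotation tr ∧ BL = piRotation bl ∧ BR = piRotation br :=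
  ⟨eq_piRotation_of_mul_self_eq_one hc.oTL hc.dTL hc.rTL.1 hc.rTL.2 hc.axTL.1 hc.axTL.2,
    eq_piRotation_of_mul_self_eq_one hc.oTR hc.dTR hc.rTR.1 hc.rTR.2 hc.axTR.1 hc.axTR.2,
    eq_piRotation_of_mul_self_eq_one hc.oBL hc.dBL hc.rBL.1 hc.rBL.2 hc.axBL.1 hc.axBL.2,
    eq_piRotation_of_mul_self_eq_one hc.oBR hc.dBR hc.rBR.1 hc.rBR.2 hc.axBR.1 hc.axBR.2⟩

lemma sq_dotProduct_tr (hc : PiRotationConfig TL TR BL BR tl tr bl br) :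
    (tl ⬝ᵥ tr) ^ 2 = 1 / 4 ∧ (bl ⬝ᵥ tr) ^ 2 = 1 / 4 := by
  obtain ⟨hn_span, hntl, hnbl⟩ := hc.condR_cross
  exact sq_dotProduct_eq_quarter_of_orthogonal hc.axTL.2 hc.axBL.2 hc.perpL hn_span
    (by rw [dotProduct_comm]; exact sq_eq_half_of_abs_eq hntl)
    (by rw [dotProduct_comm]; exact sq_eq_half_of_abs_eq hnbl) hc.axTR.2
    (by rw [dotProduct_comm]; exact dot_self_cross tr br)
    (sq_eq_half_of_abs_eq hc.condL_cross.2.1)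

lemma dotProduct_cross_mul_add_eq_zero (hc : PiRotationConfig TL TR BL BR tl tr bl br) :
    (tl ⨯₃ bl ⬝ᵥ tr) * (tl ⬝ᵥ tr) + (tl ⨯₃ bl ⬝ᵥ br) * (tl ⬝ᵥ br) = 0 ∧
      (tl ⨯₃ bl ⬝ᵥ tr) * (bl ⬝ᵥ tr) + (tl ⨯₃ bl ⬝ᵥ br) * (bl ⬝ᵥ br) = 0 := by
  have he := eq_add_of_mem_span_pair hc.axTR.2 hc.axBR.2 hc.perpR hc.condL_cross.1
  rw [dotProduct_comm tr, dotProduct_comm br] at he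
  constructor
  · have h := congrArg (tl ⬝ᵥ ·) he
    simp only [dotProduct_add, dotProduct_smul, smul_eq_mul, dot_self_cross] at h
    exact h.symm
  · have h := congrArg (bl ⬝ᵥ ·) he
    simp only [dotProduct_add, dotProduct_smul, smul_eq_mul, dot_cross_self] at h
    exact h.symm

theorem exists_isStandardAxes (hc : PiRotationConfig TL TR BL BR tl tr bl br) :
    ∃ v₁ v₂ v₃ v₄ : Fin 3 → ℝ, IsStandardAxes v₁ v₂ v₃ v₄ ∧
      TL = piRotation v₁ ∧ TR = piRotation v₂ ∧ BL = piRotation v₃ ∧ BR = piRotation v₄ := by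
  have htl := hc.axTL.2
  have hbl := hc.axBL.2
  obtain ⟨-, hetr, hebr⟩ := hc.condL_cross
  obtain ⟨ha, hb⟩ := hc.sq_dotProduct_tr
  obtain ⟨hpa, hpb⟩ := hc.dotProduct_cross_mul_add_eq_zero
  obtain ⟨ε₁, ε₂, ε₃, ε₄, h₁, h₂, h₃, h₄, hstd⟩ := exists_isStandardAxes_smul htl hbl hc.perpL
    (eq_sum_smul_frame htl hbl hc.perpL tr) (eq_sum_smul_frame htl hbl hc.perpL br) ha hb
    (sq_eq_half_of_abs_eq hetr) (sq_eq_half_of_abs_eq hebr) hpa hpb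
  obtain ⟨hTL, hTR, hBL, hBR⟩ := hc.eq_piRotation
  exact ⟨_, _, _, _, hstd, by rw [piRotation_smul h₁, hTL], by rw [piRotation_smul h₃, hTR],
    by rw [piRotation_smul h₂, hBL], by rw [piRotation_smul h₄, hBR]⟩

end PiRotationConfig

/-- Any two quadruples of `π`-rotations satisfying the configuration conditions are
simultaneously conjugate by a single element of `SO(3)`: the configuration is unique up to
the diagonal `SO(3)` action. -/
theorem pi_rotation_config_unique (TL TR BL BR TL' TR' BL' BR' : Matrix (Fin 3) (Fin 3) ℝ)
    (tl tr bl br tl' tr' bl' br' : Fin 3 → ℝ)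
    (hc : PiRotationConfig TL TR BL BR tl tr bl br)
    (hc' : PiRotationConfig TL' TR' BL' BR' tl' tr' bl' br') :
    ∃ P : Matrix (Fin 3) (Fin 3) ℝ, P ∈ Matrix.orthogonalGroup (Fin 3) ℝ ∧ P.det = 1 ∧
      TL' = P * TL * P⁻¹ ∧ TR' = P * TR * P⁻¹ ∧ BL' = P * BL * P⁻¹ ∧ BR' = P * BR * P⁻¹ := by
  obtain ⟨v₁, v₂, v₃, v₄, hv, rfl, rfl, rfl, rfl⟩ := hc.exists_isStandardAxes
  obtain ⟨w₁, w₂, w₃, w₄, hw, rfl, rfl, rfl, rfl⟩ := hc'.exists_isStandardAxes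
  obtain ⟨P, hP, hdet, rfl, rfl, rfl, rfl⟩ := hv.exists_mulVec_eq hw
  have hPP : P * Pᵀ = 1 := (mem_orthogonalGroup_iff _ _).mp hP
  refine ⟨P, hP, hdet, ?_⟩
  simp only [inv_eq_right_inv hPP, piRotation_mulVec_eq_conj hPP, and_self]
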